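/- arXiv:2405.08001 — 3 statements merged into one kernel-verified Lean document; each statement's English description precedes it below -/
import Mathlib

section
/- The function B : ℝ → ℝ defined by B(d) = -(d - d̂)² · log(d / d̂) for 0 < d < d̂ and B(d) = 0 for d ≥ d̂ is twice continuously differentiable on the open interval (0, ∞) (i.e., B is C² on the set of positive reals; in particular B, its first derivative, and its second derivative all tend to 0 as d → d̂ from the left). -/
/-! On `(0, ∞)` the branch `-(d - d̂)² log(d / d̂)` is smooth and vanishes to second order at `d̂`
(the factor `(d - d̂)²` vanishes to order two, `log(d / d̂)` to order one). Gluing a `C^n` function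
to another one that agrees with it to order `n` at the gluing point gives a `C^n` function, by
induction on `n`: the derivative of the glued function is the glued derivative. -/

open Set Filter Topology Real

theorem ContinuousOn.ite_lt {α β : Type*} [TopologicalSpace α] [LinearOrder α]
    [OrderClosedTopology α] [TopologicalSpace β] {f g : α → β} {a : α} {U : Set α}
    (hf : ContinuousOn f U) (hg : ContinuousOn g U) (hfg : f a = g a) :
    ContinuousOn (fun x => if x < a then f x else g x) U := by
  refine ContinuousOn.if (fun x hx => ?_) (hf.mono inter_subset_left) (hg.mono inter_subset_left)
  rwa [show x = a from frontier_lt_subset_eq continuous_id continuous_const hx.2]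

section Gluing

variable {E : Type*} [NormedAddCommGroup E] [NormedSpace ℝ E] {f g : ℝ → E} {a : ℝ}

theorem HasDerivAt.ite_lt {f' g' : ℝ → E} {x : ℝ} (hf : HasDerivAt f (f' x) x)
    (hg : HasDerivAt g (g' x) x) (hfg : f a = g a) (hfg' : f' a = g' a) :
    HasDerivAt (fun y => if y < a then f y else g y) (if x < a then f' x else g' x) x := by
  rcases lt_trichotomy x a with hxa | rfl | hax
  · rw [if_pos hxa]
    refine hf.congr_of_eventuallyEq ?_
    filter_upwards [Iio_mem_nhds hxa] with y hy using if_pos hy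
  · have hleft : HasDerivWithinAt (fun y => if y < x then f y else g y) (f' x) (Iic x) x :=
      hf.hasDerivWithinAt.congr
        (fun y hy => by rcases (mem_Iic.1 hy).lt_or_eq with hy | rfl <;> simp [*]) (by simp [hfg])
    have hright : HasDerivWithinAt (fun y => if y < x then f y else g y) (f' x) (Ici x) x :=
      hfg' ▸ hg.hasDerivWithinAt.congr (fun y hy => if_neg (not_lt.2 hy)) (if_neg (lt_irrefl x))
    rw [if_neg (lt_irrefl x), ← hfg', ← hasDerivWithinAt_univ, ← Iic_union_Ici]
    exact hleft.union hright
  · rw [if_neg (not_lt.2 hax.le)]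
    refine hg.congr_of_eventuallyEq ?_
    filter_upwards [Ioi_mem_nhds hax] with y hy using if_neg (not_lt.2 (le_of_lt hy))

theorem ContDiffOn.ite_lt {U : Set ℝ} (hU : IsOpen U) {n : ℕ} (hf : ContDiffOn ℝ n f U)
    (hg : ContDiffOn ℝ n g U) (hfg : ∀ k ≤ n, iteratedDeriv k f a = iteratedDeriv k g a) :
    ContDiffOn ℝ n (fun x => if x < a then f x else g x) U := by
  induction n generalizing f g with
  | zero =>
    simp only [CharP.cast_eq_zero, contDiffOn_zero] at hf hg ⊢
    simpa using hf.ite_lt hg (hfg 0 le_rfl)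
  | succ n ih =>
    push_cast at hf hg ⊢
    have hderiv : ∀ x ∈ U, HasDerivAt (fun y => if y < a then f y else g y)
        (if x < a then deriv f x else deriv g x) x := fun x hx =>
      ((hf.differentiableOn (by simp) x hx).differentiableAt (hU.mem_nhds hx)).hasDerivAt.ite_lt
        ((hg.differentiableOn (by simp) x hx).differentiableAt (hU.mem_nhds hx)).hasDerivAt
        (by simpa using hfg 0 (by omega)) (by simpa using hfg 1 (by omega))
    rw [contDiffOn_succ_iff_deriv_of_isOpen hU]
    refine ⟨fun x hx => (hderiv x hx).differentiableAt.differentiableWithinAt, by simp, ?_⟩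
    refine (ih (hf.deriv_of_isOpen hU le_rfl) (hg.deriv_of_isOpen hU le_rfl) fun k hk => ?_).congr
      fun x hx => (hderiv x hx).deriv
    simpa [← iteratedDeriv_succ'] using hfg (k + 1) (by omega)

end Gluing

noncomputable def logBarrier (dhat d : ℝ) : ℝ := -(d - dhat) ^ 2 * log (d / dhat)

section LogBarrier

variable {dhat x : ℝ}

theorem contDiffOn_logBarrier (hdhat : dhat ≠ 0) {n : WithTop ℕ∞} :
    ContDiffOn ℝ n (logBarrier dhat) {0}ᶜ := by
  unfold logBarrier
  refine ContDiffOn.mul (by fun_prop) (contDiffOn_log.comp (by fun_prop) fun d hd => ?_)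
  simp_all

theorem hasDerivAt_log_div (hdhat : dhat ≠ 0) (hx : x ≠ 0) :
    HasDerivAt (fun d => log (d / dhat)) x⁻¹ x := by
  convert ((hasDerivAt_id' x).div_const dhat).log (div_ne_zero hx hdhat) using 1
  field_simp

theorem hasDerivAt_logBarrier (hdhat : dhat ≠ 0) (hx : x ≠ 0) :
    HasDerivAt (logBarrier dhat) (-2 * (x - dhat) * log (x / dhat) - (x - dhat) ^ 2 / x) x := by
  refine ((((hasDerivAt_id' x).sub_const dhat).fun_pow 2).fun_neg.fun_mul
    (hasDerivAt_log_div hdhat hx)).congr_deriv ?_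
  field_simp
  ring

theorem hasDerivAt_deriv_logBarrier (hdhat : dhat ≠ 0) (hx : x ≠ 0) :
    HasDerivAt (fun d => -2 * (d - dhat) * log (d / dhat) - (d - dhat) ^ 2 / d)
      (-2 * log (x / dhat) - 4 * (x - dhat) / x + (x - dhat) ^ 2 / x ^ 2) x := by
  refine (((((hasDerivAt_id' x).sub_const dhat).const_mul (-2)).fun_mul
    (hasDerivAt_log_div hdhat hx)).fun_sub
    ((((hasDerivAt_id' x).sub_const dhat).fun_pow 2).fun_div (hasDerivAt_id' x) hx)).congr_deriv ?_
  field_simp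
  ring

theorem iteratedDeriv_logBarrier_self (hdhat : dhat ≠ 0) {k : ℕ} (hk : k ≤ 2) :
    iteratedDeriv k (logBarrier dhat) dhat = 0 := by
  have hderiv : deriv (logBarrier dhat) =ᶠ[𝓝 dhat]
      fun d => -2 * (d - dhat) * log (d / dhat) - (d - dhat) ^ 2 / d := by
    filter_upwards [isOpen_compl_singleton.mem_nhds hdhat] with d hd
    exact (hasDerivAt_logBarrier hdhat hd).deriv
  interval_cases k
  · simp [logBarrier]
  · simp [hderiv.eq_of_nhds]
  · rw [iteratedDeriv_succ, iteratedDeriv_one, hderiv.deriv_eq,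
      (hasDerivAt_deriv_logBarrier hdhat hdhat).deriv]
    simp

end LogBarrier

/-- The IPC barrier function `b(d) = -(d - d̂)² · log(d / d̂)` for `0 < d < d̂`,
`b(d) = 0` for `d ≥ d̂`, is twice continuously differentiable on `(0, ∞)`. -/
theorem barrier_contDiffOn (dhat : ℝ) (hdhat : 0 < dhat) (b : ℝ → ℝ)
    (hb₁ : ∀ d : ℝ, 0 < d → d < dhat → b d = -(d - dhat) ^ 2 * Real.log (d / dhat))
    (hb₂ : ∀ d : ℝ, dhat ≤ d → b d = 0) :
    ContDiffOn ℝ 2 b (Set.Ioi (0 : ℝ)) := by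
  have hglued :
      ContDiffOn ℝ (2 : ℕ) (fun d => if d < dhat then logBarrier dhat d else 0) (Ioi 0) :=
    ((contDiffOn_logBarrier hdhat.ne').mono fun _ hd => hd.ne').ite_lt isOpen_Ioi
      contDiffOn_const fun k hk => by
        rw [iteratedDeriv_logBarrier_self hdhat.ne' hk, iteratedDeriv_fun_const_zero]
  refine hglued.congr fun d hd => ?_
  by_cases hd' : d < dhat
  · rw [if_pos hd', hb₁ d hd hd', logBarrier]
  · rw [if_neg hd', hb₂ d (not_lt.1 hd')]
end

section
/- The barrier function b is strictly decreasing (strictly antitone) on the half-open interval (0, d̂]: for all d₁, d₂ with 0 < d₁ < d₂ ≤ d̂, b(d₁) > b(d₂). -/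
/-- The barrier function is strictly decreasing on `(0, d̂]`. -/
theorem barrier_strictAntiOn (dhat : ℝ) (hdhat : 0 < dhat) (b : ℝ → ℝ)
    (hb₁ : ∀ d : ℝ, 0 < d → d < dhat → b d = -(d - dhat) ^ 2 * Real.log (d / dhat))
    (hb₂ : ∀ d : ℝ, dhat ≤ d → b d = 0) :
    StrictAntiOn b (Set.Ioc 0 dhat) := by
  intro x hx y hy hxy
  have hx0 : 0 < x := hx.1
  have hxd : x < dhat := lt_of_lt_of_le hxy hy.2
  have hLx : Real.log (x / dhat) < 0 :=
    Real.log_neg (div_pos hx0 hdhat) ((div_lt_one hdhat).2 hxd)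
  rcases eq_or_lt_of_le hy.2 with h | h
  · rw [hb₂ y (le_of_eq h.symm), hb₁ x hx0 hxd]
    nlinarith [mul_pos (show (0:ℝ) < (x - dhat) ^ 2 by have h0 : x - dhat ≠ 0 := sub_ne_zero.2 hxd.ne; positivity) (neg_pos.2 hLx)]
  · rw [hb₁ x hx0 hxd, hb₁ y hy.1 h]
    have hLy : Real.log (y / dhat) < 0 :=
      Real.log_neg (div_pos hy.1 hdhat) ((div_lt_one hdhat).2 h)
    have hLL : Real.log (x / dhat) < Real.log (y / dhat) :=
      Real.log_lt_log (div_pos hx0 hdhat) (by gcongr)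
    have h1 : (y - dhat) ^ 2 < (x - dhat) ^ 2 := by nlinarith
    have h2 : -Real.log (y / dhat) < -Real.log (x / dhat) := by linarith
    have sqx : (0:ℝ) < (x - dhat) ^ 2 := by have h0 : x - dhat ≠ 0 := sub_ne_zero.2 hxd.ne; positivity
    nlinarith [mul_lt_mul_of_pos_right h1 (neg_pos.2 hLy),
      mul_lt_mul_of_pos_left h2 sqx]
end

section
/- Let F be an invertible real 3×3 matrix and H any real 3×3 matrix. For each real t, the matrix (F + t·H)ᵀ(F + t·H) is positive semidefinite, and the function t ↦ trace( sqrt( (F + t·H)ᵀ(F + t·H) ) ), where sqrt denotes the unique positive semidefinite square root, is differentiable at t = 0 with derivative trace(Rᵀ·H), where R = F · (sqrt(Fᵀ F))⁻¹. That is, the gradient of the invariant I₁(F) = trace(S) with respect to F is the rotation factor R of the polar decomposition F = R·S. -/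
/-!
Write `S = √(FᵀF)`, which is positive definite since `F` is invertible. The derivative of
`X ↦ X * X` at `S` is the Sylvester operator `V ↦ V S + S V`; it is injective (if `V S = -S V`
then `V` commutes with `S²`, hence with `S = √(S²)`, so `2 S V = 0`), hence invertible in finite
dimension. By the inverse function theorem, and because `√` is continuous on positive elements,
`t ↦ √((F + tH)ᵀ(F + tH))` is differentiable at `0` with derivative the solution `V` of
`V S + S V = HᵀF + FᵀH`. Multiplying by `S⁻¹` and taking traces gives
`2 tr V = tr (S⁻¹ (HᵀF + FᵀH)) = 2 tr ((F S⁻¹)ᵀ H)`.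
-/

open Matrix

section PSDSqrt

open scoped ComplexOrder

/-- The positive semidefinite square root of a positive semidefinite matrix
(definition from Mathlib of December 2024, since removed from Mathlib). -/
noncomputable def Matrix.PosSemidef.sqrt {n 𝕜 : Type*} [Fintype n] [RCLike 𝕜] [DecidableEq n]
    {A : Matrix n n 𝕜} (hA : A.PosSemidef) : Matrix n n 𝕜 :=
  hA.1.eigenvectorUnitary.1 * diagonal ((↑) ∘ (√·) ∘ hA.1.eigenvalues) *
  (star hA.1.eigenvectorUnitary : Matrix n n 𝕜)

end PSDSqrt

open Filter Topology
open scoped MatrixOrder Matrix.Norms.L2Operator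

section Sylvester

variable {A : Type*} [Ring A] [StarRing A] [TopologicalSpace A] [Algebra ℝ A] [PartialOrder A]
  [StarOrderedRing A] [ContinuousFunctionalCalculus ℝ A IsSelfAdjoint] [NonnegSpectrumClass ℝ A]
  [IsTopologicalRing A] [T2Space A]

theorem IsStrictlyPositive.eq_zero_of_mul_add_mul_eq_zero {S V : A} (hS : IsStrictlyPositive S)
    (h : V * S + S * V = 0) : V = 0 := by
  have hSV : S * V = -(V * S) := eq_neg_of_add_eq_zero_right h
  have hSS : Commute (S * S) V := by
    rw [Commute, SemiconjBy, mul_assoc, hSV, mul_neg, ← mul_assoc, hSV, neg_mul, neg_neg,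
      mul_assoc]
  have hcomm : Commute S V := by
    have : Commute (CFC.sqrt (S * S)) V := hSS.cfcₙ_nnreal NNReal.sqrt
    rwa [CFC.sqrt_mul_self S hS.nonneg] at this
  have h2 : (2 : ℝ) • (S * V) = 0 := by rw [two_smul, ← h, hcomm.eq, add_comm]
  have h0 : S * V = 0 := by simpa using congrArg ((2 : ℝ)⁻¹ • ·) h2
  exact hS.isUnit.mul_right_eq_zero.mp h0

end Sylvester

section FiniteDimensional

variable {A : Type*} [NormedRing A] [StarRing A] [NormedAlgebra ℝ A] [PartialOrder A]
  [StarOrderedRing A] [NonnegSpectrumClass ℝ A]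
  [IsometricContinuousFunctionalCalculus ℝ A IsSelfAdjoint] [FiniteDimensional ℝ A]

noncomputable def sylvesterEquiv (S : A) (hS : IsStrictlyPositive S) : A ≃L[ℝ] A :=
  (LinearEquiv.ofInjectiveEndo (LinearMap.mulRight ℝ S + LinearMap.mulLeft ℝ S) fun V W hVW =>
    sub_eq_zero.mp <| hS.eq_zero_of_mul_add_mul_eq_zero <| by
      simpa [sub_mul, mul_sub, sub_add_sub_comm, sub_eq_zero] using hVW).toContinuousLinearEquiv

@[simp]
theorem sylvesterEquiv_apply (S : A) (hS : IsStrictlyPositive S) (V : A) :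
    sylvesterEquiv S hS V = V * S + S * V :=
  rfl

theorem hasStrictFDerivAt_mul_self (S : A) (hS : IsStrictlyPositive S) :
    HasStrictFDerivAt (fun X : A => X * X) (sylvesterEquiv S hS : A →L[ℝ] A) S := by
  refine ((hasStrictFDerivAt_id S).mul' (hasStrictFDerivAt_id S)).congr_fderiv ?_
  ext V
  simp [add_comm]

theorem HasDerivAt.cfcSqrt [ContinuousStar A] {a : ℝ → A} {a' v : A} {t₀ : ℝ}
    (ha : HasDerivAt a a' t₀) (ha_nonneg : ∀ᶠ t in 𝓝 t₀, 0 ≤ a t)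
    (ha₀ : IsStrictlyPositive (a t₀))
    (hv : v * CFC.sqrt (a t₀) + CFC.sqrt (a t₀) * v = a') :
    HasDerivAt (fun t => CFC.sqrt (a t)) v t₀ := by
  set S := CFC.sqrt (a t₀)
  have hS : IsStrictlyPositive S := ha₀.sqrt
  have hsq := hasStrictFDerivAt_mul_self S hS
  have hSS : S * S = a t₀ := CFC.sqrt_mul_sqrt_self _ ha₀.nonneg
  have hv' : (sylvesterEquiv S hS).symm a' = v := by
    rw [ContinuousLinearEquiv.symm_apply_eq, sylvesterEquiv_apply, hv]
  have hinv : HasDerivAt (fun t => hsq.localInverse _ _ _ (a t)) v t₀ := by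
    have := hsq.to_localInverse
    rw [hSS] at this
    exact hv' ▸ this.hasFDerivAt.comp_hasDerivAt t₀ ha
  have hsqrt : Tendsto (fun t => CFC.sqrt (a t)) (𝓝 t₀) (𝓝 S) :=
    (CFC.continuousOn_sqrt.continuousWithinAt ha₀.nonneg).tendsto.comp
      (tendsto_nhdsWithin_iff.2 ⟨ha.continuousAt, ha_nonneg⟩)
  -- `√(a t)` stays near `S`, where the local inverse of squaring is a left inverse.
  refine hinv.congr_of_eventuallyEq ?_
  filter_upwards [hsqrt.eventually hsq.eventually_left_inverse, ha_nonneg] with t hleft hnonneg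
  rw [← hleft, CFC.sqrt_mul_sqrt_self _ hnonneg]

end FiniteDimensional

namespace Matrix

variable {n : Type*} [Fintype n] [DecidableEq n]

open scoped ComplexOrder in
theorem PosSemidef.sqrt_eq_cfcSqrt {𝕜 : Type*} [RCLike 𝕜] {A : Matrix n n 𝕜}
    (hA : A.PosSemidef) : hA.sqrt = CFC.sqrt A := by
  rw [CFC.sqrt_eq_real_sqrt A hA.nonneg, cfcₙ_eq_cfc (hf0 := Real.sqrt_zero), hA.1.cfc_eq,
    IsHermitian.cfc, Unitary.conjStarAlgAut_apply]
  rfl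

theorem two_mul_trace_eq_trace_inv_mul {R : Type*} [CommRing R] {S V B : Matrix n n R}
    (hS : IsUnit S) (h : V * S + S * V = B) : 2 * V.trace = (S⁻¹ * B).trace := by
  have hdet : IsUnit S.det := (isUnit_iff_isUnit_det S).mp hS
  rw [← h, Matrix.mul_add, trace_add, ← Matrix.mul_assoc, trace_mul_cycle, mul_nonsing_inv _ hdet,
    ← Matrix.mul_assoc, nonsing_inv_mul _ hdet, Matrix.one_mul, two_mul]

theorem trace_inv_mul_transpose_mul_add {R : Type*} [CommRing R] {S F H : Matrix n n R}
    (hS : Sᵀ = S) :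
    (S⁻¹ * (Hᵀ * F + Fᵀ * H)).trace = 2 * ((F * S⁻¹)ᵀ * H).trace := by
  have hS' : (S⁻¹)ᵀ = S⁻¹ := by rw [transpose_nonsing_inv, hS]
  have hswap : (S⁻¹ * (Hᵀ * F)).trace = (S⁻¹ * (Fᵀ * H)).trace := by
    rw [← trace_transpose, transpose_mul, transpose_mul, transpose_transpose, hS', trace_mul_cycle,
      Matrix.mul_assoc]
  rw [Matrix.mul_add, trace_add, hswap, transpose_mul, hS', Matrix.mul_assoc, two_mul]

theorem hasDerivAt_transpose_mul_self_add_smul (F H : Matrix n n ℝ) :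
    HasDerivAt (fun t : ℝ => (F + t • H)ᵀ * (F + t • H)) (Hᵀ * F + Fᵀ * H) 0 := by
  have hline : ∀ G K : Matrix n n ℝ, HasDerivAt (fun t : ℝ => G + t • K) K 0 := fun G K => by
    simpa using ((hasDerivAt_id (0 : ℝ)).smul_const K).const_add G
  have h := (hline Fᵀ Hᵀ).mul (hline F H)
  simp only [zero_smul, add_zero] at h
  simp only [transpose_add, transpose_smul]
  exact h

end Matrix

/-- For invertible `F`, each `(F + tH)ᵀ(F + tH)` is positive semidefinite, and
`t ↦ trace(sqrt((F + tH)ᵀ(F + tH)))` is differentiable at `0` with derivative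
`trace(RᵀH)` where `R = F · (sqrt(FᵀF))⁻¹` is the rotation factor of the polar
decomposition of `F`: the gradient of `I₁(F) = trace(S)` is `R`. -/
theorem I1_gradient (F H : Matrix (Fin 3) (Fin 3) ℝ) (hF : IsUnit F.det) :
    ∃ (hps : ∀ t : ℝ, ((F + t • H)ᵀ * (F + t • H)).PosSemidef)
      (hFF : (Fᵀ * F).PosSemidef),
      HasDerivAt (fun t : ℝ => ((hps t).sqrt).trace)
        (((F * hFF.sqrt⁻¹)ᵀ * H).trace) 0 := by
  have hps : ∀ t : ℝ, ((F + t • H)ᵀ * (F + t • H)).PosSemidef := fun t => by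
    simpa using posSemidef_conjTranspose_mul_self (F + t • H)
  have hFF : (Fᵀ * F).PosSemidef := by simpa using hps 0
  refine ⟨hps, hFF, ?_⟩
  simp only [PosSemidef.sqrt_eq_cfcSqrt]
  have hpos : IsStrictlyPositive (Fᵀ * F) := by
    refine IsStrictlyPositive.iff_of_unital.mpr ⟨hFF.nonneg, ?_⟩
    rw [isUnit_iff_isUnit_det, det_mul, det_transpose]
    exact hF.mul hF
  set S := CFC.sqrt (Fᵀ * F)
  have hS : IsStrictlyPositive S := hpos.sqrt
  have hSt : Sᵀ = S := by
    simpa [star_eq_conjTranspose] using (IsSelfAdjoint.of_nonneg hS.nonneg).star_eq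
  obtain ⟨V, hV⟩ := (sylvesterEquiv S hS).surjective (Hᵀ * F + Fᵀ * H)
  rw [sylvesterEquiv_apply] at hV
  have hsqrt := (hasDerivAt_transpose_mul_self_add_smul F H).cfcSqrt
    (Eventually.of_forall fun t => (hps t).nonneg) (by simpa using hpos) (by simpa using hV)
  have htrace :
      HasDerivAt (fun t : ℝ => (CFC.sqrt ((F + t • H)ᵀ * (F + t • H))).trace) V.trace 0 :=
    (traceLinearMap (Fin 3) ℝ ℝ).toContinuousLinearMap.hasFDerivAt.comp_hasDerivAt 0 hsqrt
  convert htrace using 1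
  have := two_mul_trace_eq_trace_inv_mul hS.isUnit hV
  rw [trace_inv_mul_transpose_mul_add hSt] at this
  linarith
end
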